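/- arXiv:1508.00039 — 6 statements merged into one kernel-verified Lean document; each statement's English description precedes it below -/
import Mathlib

section
/- Let x be a permutation in the symmetric group S_k, and define ind(x) = k - orb(x), where orb(x) is the number of orbits (cycles, including fixed points) of x on {1,...,k}. If ind(x) < k/2, then for every integer m with 1 ≤ m ≤ k, there exists a subset of {1,...,k} of size m that is fixed (setwise) by x. -/
open Finset

/-- Key combinatorial lemma: given a set `F` of fixed points of `x` and a family `𝒯`
of pairwise disjoint `x`-invariant sets disjoint from `F`, each of size at most
`F.card + 1`, every `m` up to the total size is the size of an `x`-invariant set. -/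
lemma key_lemma {α : Type*} [DecidableEq α] (x : Equiv.Perm α) (F : Finset α)
    (hF : ∀ a ∈ F, x a = a) (𝒯 : Finset (Finset α)) :
    (∀ T ∈ 𝒯, Disjoint T F) →
    ((𝒯 : Set (Finset α)).Pairwise Disjoint) →
    (∀ T ∈ 𝒯, T.image x = T) →
    (∀ T ∈ 𝒯, T.card ≤ F.card + 1) →
    ∀ m ≤ F.card + ∑ T ∈ 𝒯, T.card,
      ∃ S, S ⊆ F ∪ 𝒯.sup id ∧ S.card = m ∧ S.image x = S := by
  induction 𝒯 using Finset.induction_on with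
  | empty =>
    intro _ _ _ _ m hm
    simp only [Finset.sum_empty, Nat.add_zero] at hm
    obtain ⟨S, hS, hScard⟩ := Finset.exists_subset_card_eq hm
    refine ⟨S, ?_, hScard, ?_⟩
    · exact hS.trans Finset.subset_union_left
    · have : S.image x = S.image id := Finset.image_congr fun a ha => hF a (hS ha)
      simpa using this
  | @insert T 𝒮 hT ih =>
    intro hdisjF hpair hfix hcard m hm
    have hTF : Disjoint T F := hdisjF T (Finset.mem_insert_self T 𝒮)
    have hdisjF' : ∀ U ∈ 𝒮, Disjoint U F := fun U hU =>
      hdisjF U (Finset.mem_insert_of_mem hU)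
    have hpair' : (𝒮 : Set (Finset α)).Pairwise Disjoint :=
      hpair.mono (by simp [Finset.coe_insert, Set.subset_insert])
    have hfix' : ∀ U ∈ 𝒮, U.image x = U := fun U hU => hfix U (Finset.mem_insert_of_mem hU)
    have hcard' : ∀ U ∈ 𝒮, U.card ≤ F.card + 1 := fun U hU =>
      hcard U (Finset.mem_insert_of_mem hU)
    rw [Finset.sum_insert hT] at hm
    by_cases hcase : m ≤ F.card + ∑ U ∈ 𝒮, U.card
    · obtain ⟨S, hSsub, hScard, hSim⟩ := ih hdisjF' hpair' hfix' hcard' m hcase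
      refine ⟨S, hSsub.trans (Finset.union_subset_union le_rfl ?_), hScard, hSim⟩
      exact Finset.le_iff_subset.mp (Finset.sup_mono (Finset.subset_insert T 𝒮))
    · push_neg at hcase
      have hTcard : T.card ≤ F.card + 1 := hcard T (Finset.mem_insert_self T 𝒮)
      have hTm : T.card ≤ m := by omega
      obtain ⟨S, hSsub, hScard, hSim⟩ := ih hdisjF' hpair' hfix' hcard' (m - T.card) (by omega)
      have hTdisjS : Disjoint T S := by
        refine Finset.disjoint_left.mpr fun a haT haS => ?_
        rcases Finset.mem_union.mp (hSsub haS) with hF' | hsup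
        · exact (Finset.disjoint_left.mp hTF) haT hF'
        · obtain ⟨U, hU, haU⟩ := Finset.mem_sup.mp hsup
          have hTU : Disjoint T U := hpair (by simp) (by simp [hU])
            (fun hTU => hT (hTU ▸ hU))
          exact (Finset.disjoint_left.mp hTU) haT haU
      refine ⟨S ∪ T, ?_, ?_, ?_⟩
      · apply Finset.union_subset
        · exact hSsub.trans (Finset.union_subset_union le_rfl
            (Finset.sup_mono (Finset.subset_insert T 𝒮)))
        · exact (Finset.le_iff_subset.mp
            (Finset.le_sup (f := id) (Finset.mem_insert_self T 𝒮))).trans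
            Finset.subset_union_right
      · rw [Finset.card_union_of_disjoint hTdisjS.symm, hScard]
        omega
      · rw [Finset.image_union, hSim, hfix T (Finset.mem_insert_self T 𝒮)]

/-- If `ind(x) = k - orb(x) < k/2` then `x` fixes (setwise) a subset of every size
`1 ≤ m ≤ k`.  Here `ind(x) = cycleType.sum - cycleType.card`. -/
theorem stmt0 (k : ℕ) (x : Equiv.Perm (Fin k))
    (h : 2 * (x.cycleType.sum - x.cycleType.card) < k) :
    ∀ m : ℕ, 1 ≤ m → m ≤ k →
      ∃ S : Finset (Fin k), S.card = m ∧ S.image x = S := by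
  intro m _ hmk
  set F : Finset (Fin k) := x.supportᶜ with hFdef
  have hF : ∀ a ∈ F, x a = a := by
    intro a ha
    simpa [Equiv.Perm.mem_support, not_not] using Finset.mem_compl.mp ha
  have hFcard : F.card = k - x.support.card := by
    simp [hFdef, Finset.card_compl]
  have hsupk : x.support.card ≤ k := by
    simpa using Finset.card_le_univ x.support
  -- arithmetic facts about cycle type
  have hsum : x.cycleType.sum = x.support.card := x.sum_cycleType
  -- each cycle length ℓ satisfies ℓ ≤ F.card + 1
  have hlen : ∀ ℓ ∈ x.cycleType, ℓ ≤ (k - x.support.card) + 1 := by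
    intro ℓ hℓ
    obtain ⟨t, ht⟩ := Multiset.exists_cons_of_mem hℓ
    have h2 : ∀ n ∈ t, 2 ≤ n := fun n hn =>
      Equiv.Perm.two_le_of_mem_cycleType (by rw [ht]; exact Multiset.mem_cons_of_mem hn)
    have htsum : 2 * t.card ≤ t.sum := by
      simpa [mul_comm] using Multiset.card_nsmul_le_sum h2
    have hℓ2 : 2 ≤ ℓ := Equiv.Perm.two_le_of_mem_cycleType hℓ
    have hs : x.cycleType.sum = ℓ + t.sum := by rw [ht]; simp
    have hc : x.cycleType.card = t.card + 1 := by rw [ht]; simp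
    omega
  set 𝒯 : Finset (Finset (Fin k)) := x.cycleFactorsFinset.image Equiv.Perm.support with h𝒯
  have hmemfix : ∀ c ∈ x.cycleFactorsFinset, ∀ a ∈ c.support, x a = c a := by
    intro c hc a ha
    exact ((Equiv.Perm.mem_cycleFactorsFinset_iff.mp hc).2 a ha).symm
  have hsub : ∀ c ∈ x.cycleFactorsFinset, c.support ⊆ x.support := by
    intro c hc a ha
    rw [Equiv.Perm.mem_support, hmemfix c hc a ha]
    exact Equiv.Perm.mem_support.mp ha
  have hTfix : ∀ T ∈ 𝒯, T.image x = T := by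
    intro T hT
    obtain ⟨c, hc, rfl⟩ := Finset.mem_image.mp hT
    apply Finset.eq_of_subset_of_card_le
    · intro b hb
      obtain ⟨a, ha, rfl⟩ := Finset.mem_image.mp hb
      rw [hmemfix c hc a ha]
      exact Equiv.Perm.apply_mem_support.mpr ha
    · rw [Finset.card_image_of_injective _ x.injective]
  have hTdisjF : ∀ T ∈ 𝒯, Disjoint T F := by
    intro T hT
    obtain ⟨c, hc, rfl⟩ := Finset.mem_image.mp hT
    rw [hFdef]
    exact disjoint_compl_right.mono_left (Finset.le_iff_subset.mpr (hsub c hc))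
  have hinj : Set.InjOn Equiv.Perm.support (x.cycleFactorsFinset : Set (Equiv.Perm (Fin k))) := by
    intro c hc d hd hcd
    by_contra hne
    have hdisj := (Equiv.Perm.cycleFactorsFinset_pairwise_disjoint x hc hd hne).disjoint_support
    rw [hcd, disjoint_self] at hdisj
    have := (Equiv.Perm.mem_cycleFactorsFinset_iff.mp (by exact_mod_cast hd)).1.nonempty_support
    rw [hdisj] at this
    exact Finset.not_nonempty_empty this
  have hpair : (𝒯 : Set (Finset (Fin k))).Pairwise Disjoint := by
    intro S hS T hT hST
    simp only [h𝒯, Finset.coe_image, Set.mem_image] at hS hT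
    obtain ⟨c, hc, rfl⟩ := hS
    obtain ⟨d, hd, rfl⟩ := hT
    have hne : c ≠ d := fun hcd => hST (by rw [hcd])
    exact (Equiv.Perm.cycleFactorsFinset_pairwise_disjoint x hc hd hne).disjoint_support
  have hTsum : ∑ T ∈ 𝒯, T.card = x.cycleType.sum := by
    rw [h𝒯, Finset.sum_image (fun c hc d hd => hinj (by exact_mod_cast hc) (by exact_mod_cast hd))]
    rw [Equiv.Perm.cycleType_def]
    rfl
  have hTcard : ∀ T ∈ 𝒯, T.card ≤ F.card + 1 := by
    intro T hT
    obtain ⟨c, hc, rfl⟩ := Finset.mem_image.mp hT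
    have : c.support.card ∈ x.cycleType := by
      rw [Equiv.Perm.cycleType_def]
      exact Multiset.mem_map.mpr ⟨c, hc, rfl⟩
    have := hlen _ this
    omega
  obtain ⟨S, _, hScard, hSim⟩ := key_lemma x F hF 𝒯 hTdisjF hpair hTfix hTcard m
    (by rw [hTsum]; omega)
  exact ⟨S, hScard, hSim⟩
end

section
/- For a real number t with 0 < t < 1 and an integer r ≥ 1, the coefficient of u^r in the power series (1-u)^{-t}, namely t(t+1)···(t+r-1)/r!, is at most t·e^t·r^{t-1}. -/
/-!
Write the coefficient as `t / r` times `∏_{k<r} (1 + t/k)`. Each factor is at most `exp (t/k)`,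
so the product is at most `exp (t H_{r-1}) ≤ exp (t (1 + log r)) = e^t r^t`.
-/

open Finset Real

lemma prod_one_add_div_le_exp_mul_harmonic {t : ℝ} (ht : -1 ≤ t) (n : ℕ) :
    ∏ i ∈ range n, (1 + t / (i + 1)) ≤ exp (t * harmonic n) := by
  have hfactor : ∀ i ∈ range n, 0 ≤ 1 + t / ((i : ℝ) + 1) := fun i _ => by
    have hi : (1 : ℝ) ≤ i + 1 := by simp
    rw [← neg_le_iff_add_nonneg', le_div_iff₀ (by positivity)]
    nlinarith
  calc ∏ i ∈ range n, (1 + t / (i + 1))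
      ≤ ∏ i ∈ range n, exp (t / (i + 1)) :=
        prod_le_prod hfactor fun i _ => by linarith [add_one_le_exp (t / ((i : ℝ) + 1))]
    _ = exp (t * harmonic n) := by
        rw [← exp_sum, harmonic, Rat.cast_sum, mul_sum]
        push_cast
        simp only [div_eq_mul_inv]

lemma exp_mul_harmonic_le {t : ℝ} (ht : 0 ≤ t) (n : ℕ) :
    exp (t * harmonic n) ≤ exp t * ((n : ℝ) + 1) ^ t := by
  have hlog : (harmonic n : ℝ) ≤ 1 + log (n + 1) := by
    refine (harmonic_le_one_add_log n).trans (add_le_add_right ?_ 1)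
    rcases n.eq_zero_or_pos with rfl | hn
    · simp
    · exact log_le_log (by positivity) (by linarith)
  calc exp (t * harmonic n) ≤ exp (t * (1 + log (n + 1))) := by gcongr
    _ = exp t * ((n : ℝ) + 1) ^ t := by
        rw [rpow_def_of_pos (by positivity), ← exp_add]
        ring_nf

lemma prod_add_div_factorial_succ (t : ℝ) (n : ℕ) :
    (∏ i ∈ range (n + 1), (t + i)) / (n + 1).factorial =
      t / (n + 1) * ∏ i ∈ range n, (1 + t / (i + 1)) := by
  have hfactor : ∀ i ∈ range n, 1 + t / ((i : ℝ) + 1) = (t + (i + 1 : ℕ)) / (i + 1 : ℕ) :=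
    fun i _ => by push_cast; field_simp; ring
  rw [prod_congr rfl hfactor, prod_div_distrib, prod_range_succ', Nat.factorial_succ,
    ← prod_range_add_one_eq_factorial]
  push_cast
  field_simp
  ring

theorem stmt4_general (t : ℝ) (ht0 : 0 < t) (r : ℕ) (hr : 1 ≤ r) :
    (∏ i ∈ Finset.range r, (t + i)) / (Nat.factorial r) ≤
      t * Real.exp t * (r : ℝ) ^ (t - 1) := by
  obtain ⟨n, rfl⟩ : ∃ n, r = n + 1 := ⟨r - 1, by omega⟩
  have hn : (0 : ℝ) < n + 1 := by positivity
  rw [prod_add_div_factorial_succ]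
  calc t / (n + 1) * ∏ i ∈ range n, (1 + t / (i + 1))
      ≤ t / (n + 1) * (exp t * ((n : ℝ) + 1) ^ t) := by
        gcongr
        exact (prod_one_add_div_le_exp_mul_harmonic (by linarith) n).trans
          (exp_mul_harmonic_le ht0.le n)
    _ = t * exp t * ((n + 1 : ℕ) : ℝ) ^ (t - 1) := by
        rw [Nat.cast_succ, rpow_sub_one hn.ne']
        ring

/-- The coefficient of `u^r` in `(1-u)^{-t}`, namely `t(t+1)⋯(t+r-1)/r!`, is at
most `t e^t r^{t-1}`. -/
theorem stmt4 (t : ℝ) (ht0 : 0 < t) (ht1 : t < 1) (r : ℕ) (hr : 1 ≤ r) :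
    (∏ i ∈ Finset.range r, (t + i)) / (Nat.factorial r) ≤
      t * Real.exp t * (r : ℝ) ^ (t - 1) :=
  stmt4_general t ht0 r hr
end

section
/- Let b be a positive integer dividing n. The proportion of permutations in S_n all of whose cycle lengths are divisible by b equals the coefficient of u^n in the power series (1 - u^b)^{-1/b}. -/
/-!
Let `a n` be the proportion of permutations of `n` points all of whose cycle lengths satisfy `p`.
A permutation whose cycle through a chosen point `x` has length `t` is the same thing as the
sequence of the other `t - 1` points of that cycle, listed in cycle order, together with a
permutation of the remaining `n - t` points. Counting these gives
`n * a n = ∑_{1 ≤ t ≤ n, p t} a (n - t)`. When `p t` means `b ∣ t`, subtracting two consecutive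
instances of this recursion gives `(m + 1) b * a ((m + 1) b) = (m b + 1) * a (m b)`, and the
product formula follows by induction on `m`.
-/

open Equiv Function Finset

theorem Function.iterate_mod_of_minimalPeriod_eq {α : Type*} {f : α → α} {x : α} {m : ℕ}
    (h : minimalPeriod f x = m) (n : ℕ) : f^[n % m] x = f^[n] x :=
  h ▸ iterate_mod_minimalPeriod_eq

theorem Function.Semiconj.minimalPeriod_eq {α β : Type*} {fa : α → α} {fb : β → β} {g : α → β}
    (h : Semiconj g fa fb) (hg : Injective g) (x : α) :
    minimalPeriod fb (g x) = minimalPeriod fa x :=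
  minimalPeriod_eq_minimalPeriod_iff.mpr fun n => by
    simp only [IsPeriodicPt, IsFixedPt, ← h.iterate_right n x, hg.eq_iff]

theorem List.minimalPeriod_formPerm {α : Type*} [DecidableEq α] {l : List α} (hl : l.Nodup)
    {a : α} (ha : a ∈ l) : minimalPeriod l.formPerm a = l.length := by
  obtain ⟨i, hi, rfl⟩ := List.getElem_of_mem ha
  refine Nat.dvd_antisymm ?_ ?_
  · apply IsPeriodicPt.minimalPeriod_dvd
    simp [IsPeriodicPt, IsFixedPt, Perm.iterate_eq_pow, formPerm_pow_length_eq_one_of_nodup l hl]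
  · have h := isPeriodicPt_minimalPeriod l.formPerm l[i]
    rw [IsPeriodicPt, IsFixedPt, Perm.iterate_eq_pow, formPerm_pow_apply_getElem l hl _ _ hi,
      hl.getElem_inj_iff] at h
    have : i + _ ≡ i + 0 [MOD l.length] := h.trans (Nat.mod_eq_of_lt hi).symm
    exact Nat.modEq_zero_iff_dvd.mp (Nat.ModEq.add_left_cancel' i this)

theorem List.Nodup.natCard_not_mem {α : Type*} [Fintype α] [DecidableEq α] {l : List α}
    (hl : l.Nodup) : Nat.card {a // a ∉ l} = Fintype.card α - l.length := by
  rw [Nat.card_eq_fintype_card, Fintype.card_subtype_compl, ← List.toFinset_card_of_nodup hl,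
    ← Fintype.card_coe]
  simp only [List.mem_toFinset]

namespace Equiv.Perm

variable {α : Type*}

theorem minimalPeriod_pos [Finite α] (σ : Perm α) (a : α) : 0 < minimalPeriod σ a :=
  minimalPeriod_pos_of_mem_periodicPts (σ.injective.mem_periodicPts a)

theorem minimalPeriod_permCongr {β : Type*} (f : α ≃ β) (σ : Perm α) (a : α) :
    minimalPeriod (f.permCongr σ) (f a) = minimalPeriod σ a :=
  Semiconj.minimalPeriod_eq (fun y => by simp [permCongr_apply]) f.injective a

theorem minimalPeriod_subtypePerm {p : α → Prop} (σ : Perm α) (h : ∀ x, p (σ x) ↔ p x)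
    (a : {x // p x}) : minimalPeriod (σ.subtypePerm h) a = minimalPeriod σ a :=
  (Semiconj.minimalPeriod_eq (g := Subtype.val) (fb := σ) (fun _ => rfl) Subtype.val_injective
    a).symm

section CycleThrough

variable {x : α} {k : ℕ}

def cycleList (x : α) (e : Fin k ↪ {y // y ≠ x}) : List α :=
  x :: List.ofFn fun i => (e i : α)

theorem nodup_cycleList (e : Fin k ↪ {y // y ≠ x}) : (cycleList x e).Nodup := by
  refine List.nodup_cons.mpr ⟨fun hx => ?_, List.nodup_ofFn.mpr ?_⟩
  · obtain ⟨i, hi⟩ := List.mem_ofFn.mp hx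
    exact (e i).2 hi
  · exact fun i j hij => e.injective (Subtype.ext hij)

theorem length_cycleList (e : Fin k ↪ {y // y ≠ x}) : (cycleList x e).length = k + 1 := by
  simp [cycleList]

def orbitEmbedding (σ : Perm α) (h : minimalPeriod σ x = k + 1) : Fin k ↪ {y // y ≠ x} where
  toFun i := ⟨σ^[i + 1] x, fun hx => by
    have := (iterate_eq_iterate_iff_of_lt_minimalPeriod (m := i + 1) (n := 0)
      (by omega) (by omega)).mp hx
    omega⟩
  inj' i j hij := Fin.ext <| by
    have := (iterate_eq_iterate_iff_of_lt_minimalPeriod (f := σ) (x := x) (m := i + 1)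
      (n := j + 1) (by omega) (by omega)).mp (congrArg Subtype.val hij)
    omega

variable {σ : Perm α}

theorem cycleList_orbitEmbedding (h : minimalPeriod σ x = k + 1) :
    cycleList x (orbitEmbedding σ h) = List.ofFn fun i : Fin (k + 1) => σ^[i] x := by
  rw [List.ofFn_succ]
  rfl

theorem mem_cycleList_orbitEmbedding [Finite α] (h : minimalPeriod σ x = k + 1) {a : α} :
    a ∈ cycleList x (orbitEmbedding σ h) ↔ σ.SameCycle x a := by
  rw [cycleList_orbitEmbedding, List.mem_ofFn]
  constructor
  · rintro ⟨i, rfl⟩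
    rw [iterate_eq_pow]
    exact sameCycle_pow_right.mpr (SameCycle.refl σ x)
  · intro hxa
    obtain ⟨n, rfl⟩ := hxa.exists_nat_pow_eq
    refine ⟨⟨n % (k + 1), Nat.mod_lt _ k.succ_pos⟩, ?_⟩
    rw [iterate_mod_of_minimalPeriod_eq h, iterate_eq_pow]

theorem apply_mem_cycleList_orbitEmbedding_iff [Finite α] (h : minimalPeriod σ x = k + 1)
    {a : α} :
    σ a ∈ cycleList x (orbitEmbedding σ h) ↔ a ∈ cycleList x (orbitEmbedding σ h) := by
  simp only [mem_cycleList_orbitEmbedding h, sameCycle_apply_right]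

variable [DecidableEq α]

theorem formPerm_ofFn_iterate (h : minimalPeriod σ x = k + 1) (i : Fin (k + 1)) :
    (List.ofFn fun i : Fin (k + 1) => σ^[i] x).formPerm (σ^[i] x) = σ (σ^[i] x) := by
  have hnodup := cycleList_orbitEmbedding h ▸ nodup_cycleList (orbitEmbedding σ h)
  have := List.formPerm_apply_getElem _ hnodup i (by simpa using i.is_le)
  simp only [List.getElem_ofFn, List.length_ofFn] at this
  rw [this, iterate_mod_of_minimalPeriod_eq h, iterate_succ_apply']

def glueCycle (e : Fin k ↪ {y // y ≠ x}) (τ : Perm {a // a ∉ cycleList x e}) : Perm α :=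
  ((cycleList x e).formPerm.subtypePerm fun _ => List.formPerm_mem_iff_mem).subtypeCongr τ

theorem glueCycle_orbitEmbedding [Finite α] (h : minimalPeriod σ x = k + 1) :
    glueCycle (orbitEmbedding σ h)
      (σ.subtypePerm fun _ => not_congr (apply_mem_cycleList_orbitEmbedding_iff h)) = σ := by
  ext a
  by_cases ha : a ∈ cycleList x (orbitEmbedding σ h)
  · rw [glueCycle, subtypeCongr.left_apply _ _ ha, subtypePerm_apply]
    obtain ⟨i, rfl⟩ := List.mem_ofFn.mp (cycleList_orbitEmbedding h ▸ ha)
    simp only [cycleList_orbitEmbedding h]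
    exact formPerm_ofFn_iterate h i
  · rw [glueCycle, subtypeCongr.right_apply _ _ ha, subtypePerm_apply]

variable {e : Fin k ↪ {y // y ≠ x}} {τ : Perm {a // a ∉ cycleList x e}}

theorem iterate_glueCycle_of_mem {a : α} (ha : a ∈ cycleList x e) (n : ℕ) :
    (glueCycle e τ)^[n] a = (cycleList x e).formPerm^[n] a := by
  set c := (cycleList x e).formPerm.subtypePerm fun _ => List.formPerm_mem_iff_mem
  have hglue : Semiconj Subtype.val c (glueCycle e τ) :=
    fun z => (subtypeCongr.left_apply_subtype c τ z).symm
  have hform : Semiconj Subtype.val c (cycleList x e).formPerm := fun _ => rfl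
  exact ((hglue.iterate_right n) ⟨a, ha⟩).symm.trans ((hform.iterate_right n) ⟨a, ha⟩)

theorem iterate_glueCycle_succ (i : Fin k) : (glueCycle e τ)^[i + 1] x = e i := by
  have h := List.formPerm_pow_apply_getElem _ (nodup_cycleList e) (i + 1) 0
    (by simp [length_cycleList])
  rw [← iterate_eq_pow] at h
  rw [iterate_glueCycle_of_mem List.mem_cons_self]
  refine h.trans ?_
  simp [cycleList, Nat.mod_eq_of_lt]

theorem minimalPeriod_glueCycle_of_mem {a : α} (ha : a ∈ cycleList x e) :
    minimalPeriod (glueCycle e τ) a = k + 1 := by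
  rw [← length_cycleList e, ← List.minimalPeriod_formPerm (nodup_cycleList e) ha]
  exact minimalPeriod_eq_minimalPeriod_iff.mpr fun n => by
    simp only [IsPeriodicPt, IsFixedPt, iterate_glueCycle_of_mem ha]

theorem glueCycle_apply_of_not_mem (a : {a // a ∉ cycleList x e}) : glueCycle e τ a = τ a :=
  subtypeCongr.right_apply_subtype _ τ a

theorem minimalPeriod_glueCycle_of_not_mem (a : {a // a ∉ cycleList x e}) :
    minimalPeriod (glueCycle e τ) a = minimalPeriod τ a :=
  Semiconj.minimalPeriod_eq (fun z => (glueCycle_apply_of_not_mem z).symm) Subtype.val_injective a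

end CycleThrough

end Equiv.Perm

noncomputable def numPermsWithPeriods (p : ℕ → Prop) (n : ℕ) : ℕ :=
  Nat.card {σ : Perm (Fin n) // ∀ a, p (minimalPeriod σ a)}

theorem numPermsWithPeriods_zero (p : ℕ → Prop) : numPermsWithPeriods p 0 = 1 := by
  simp [numPermsWithPeriods]

namespace Equiv.Perm

variable {α : Type*} {p : ℕ → Prop} {k : ℕ}

theorem card_permsWithPeriods_eq [Finite α] :
    Nat.card {σ : Perm α // ∀ a, p (minimalPeriod σ a)} = numPermsWithPeriods p (Nat.card α) :=
  let f := Finite.equivFin α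
  Nat.card_congr <| (permCongr f).subtypeEquiv fun σ =>
    f.forall_congr fun a => by rw [minimalPeriod_permCongr]

variable [DecidableEq α]

theorem periods_glueCycle {x : α} (hp : p (k + 1)) {e : Fin k ↪ {y // y ≠ x}}
    {τ : Perm {a // a ∉ cycleList x e}} (hτ : ∀ a, p (minimalPeriod τ a)) (a : α) :
    p (minimalPeriod (glueCycle e τ) a) := by
  by_cases ha : a ∈ cycleList x e
  · rwa [minimalPeriod_glueCycle_of_mem ha]
  · exact minimalPeriod_glueCycle_of_not_mem ⟨a, ha⟩ ▸ hτ _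

/-- The permutation with cycle `x ↦ e 0 ↦ ⋯ ↦ e (k - 1) ↦ x` and acting as `τ` elsewhere
is encoded by the pair `⟨e, τ⟩`. -/
abbrev CycleData (p : ℕ → Prop) (x : α) (k : ℕ) : Type _ :=
  Σ e : Fin k ↪ {y // y ≠ x}, {τ : Perm {a // a ∉ cycleList x e} // ∀ a, p (minimalPeriod τ a)}

def glueCycleData (x : α) (hp : p (k + 1)) (d : CycleData p x k) :
    {σ : Perm α // (∀ a, p (minimalPeriod σ a)) ∧ minimalPeriod σ x = k + 1} :=
  ⟨glueCycle d.1 d.2.1, periods_glueCycle hp d.2.2,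
    minimalPeriod_glueCycle_of_mem List.mem_cons_self⟩

theorem glueCycleData_injective (x : α) (hp : p (k + 1)) : Injective (glueCycleData x hp) := by
  rintro ⟨e₁, τ₁, hτ₁⟩ ⟨e₂, τ₂, hτ₂⟩ h
  have hσ : glueCycle e₁ τ₁ = glueCycle e₂ τ₂ := congrArg Subtype.val h
  obtain rfl : e₁ = e₂ := by
    ext i
    rw [← iterate_glueCycle_succ (τ := τ₁), hσ, iterate_glueCycle_succ]
  obtain rfl : τ₁ = τ₂ := by
    ext a
    rw [← glueCycle_apply_of_not_mem (e := e₁), hσ, glueCycle_apply_of_not_mem]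
  rfl

theorem glueCycleData_surjective [Finite α] (x : α) (hp : p (k + 1)) :
    Surjective (glueCycleData x hp) := by
  rintro ⟨σ, hσ, hx⟩
  exact ⟨⟨orbitEmbedding σ hx,
      σ.subtypePerm fun _ => not_congr (apply_mem_cycleList_orbitEmbedding_iff hx),
      fun a => minimalPeriod_subtypePerm σ _ a ▸ hσ a⟩,
    Subtype.ext (glueCycle_orbitEmbedding hx)⟩

theorem card_permsWithPeriods_minimalPeriod_eq [Fintype α] (x : α) (hp : p (k + 1)) :
    Nat.card {σ : Perm α // (∀ a, p (minimalPeriod σ a)) ∧ minimalPeriod σ x = k + 1} =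
      (Fintype.card α - 1).descFactorial k * numPermsWithPeriods p (Fintype.card α - (k + 1)) := by
  rw [← Nat.card_eq_of_bijective _ ⟨glueCycleData_injective x hp, glueCycleData_surjective x hp⟩,
    Nat.card_sigma]
  simp only [card_permsWithPeriods_eq, (nodup_cycleList _).natCard_not_mem, length_cycleList,
    sum_const, card_univ, Fintype.card_embedding_eq, Fintype.card_fin, smul_eq_mul, ne_eq,
    Fintype.card_subtype_compl, Fintype.card_unique]

end Equiv.Perm

open Equiv.Perm in
theorem numPermsWithPeriods_eq_sum (p : ℕ → Prop) [DecidablePred p] {n : ℕ} (hn : 0 < n) :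
    numPermsWithPeriods p n =
      ∑ t ∈ (Icc 1 n).filter p, (n - 1).descFactorial (t - 1) * numPermsWithPeriods p (n - t) := by
  let x : Fin n := ⟨0, hn⟩
  have hx : ∀ σ ∈ univ.filter fun σ : Perm (Fin n) => ∀ a, p (minimalPeriod σ a),
      minimalPeriod σ x ∈ (Icc 1 n).filter p := fun σ hσ => by
    refine mem_filter.mpr ⟨mem_Icc.mpr ⟨minimalPeriod_pos σ x, ?_⟩, (mem_filter.mp hσ).2 x⟩
    simpa using minimalPeriod_le_card (f := σ) (x := x)
  rw [numPermsWithPeriods, Nat.card_eq_fintype_card, Fintype.card_subtype,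
    card_eq_sum_card_fiberwise hx]
  refine sum_congr rfl fun t ht => ?_
  obtain ⟨k, rfl⟩ : ∃ k, t = k + 1 := ⟨t - 1, by grind⟩
  rw [filter_filter, ← Fintype.card_subtype, ← Nat.card_eq_fintype_card,
    card_permsWithPeriods_minimalPeriod_eq x (mem_filter.mp ht).2, Fintype.card_fin]
  rfl

open Nat in
theorem mul_numPermsWithPeriods_div_factorial (p : ℕ → Prop) [DecidablePred p] (n : ℕ) :
    (n : ℝ) * (numPermsWithPeriods p n / n !) =
      ∑ t ∈ (Icc 1 n).filter p, (numPermsWithPeriods p (n - t) : ℝ) / (n - t)! := by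
  rcases n.eq_zero_or_pos with rfl | hn
  · simp
  have hn' : (n : ℝ) ≠ 0 := by positivity
  rw [numPermsWithPeriods_eq_sum p hn, ← mul_factorial_pred hn.ne', cast_mul, ← mul_div_assoc,
    mul_div_mul_left _ _ hn', cast_sum, sum_div]
  refine sum_congr rfl fun t ht => ?_
  have ht' : t - 1 ≤ n - 1 := by grind
  have hsub : n - 1 - (t - 1) = n - t := by grind
  have hd : ((n - 1).descFactorial (t - 1) : ℝ) ≠ 0 := by
    exact_mod_cast descFactorial_eq_zero_iff_lt.not.mpr ht'.not_gt
  rw [← factorial_mul_descFactorial ht', hsub, cast_mul, cast_mul, mul_comm,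
    mul_div_mul_right _ _ hd]

theorem sum_filter_dvd_Icc_mul {M : Type*} [AddCommMonoid M] {b : ℕ} (hb : 0 < b) (m : ℕ)
    (f : ℕ → M) :
    ∑ t ∈ (Icc 1 (b * m)).filter (b ∣ ·), f (b * m - t) = ∑ j ∈ range m, f (b * j) := by
  have mem {t : ℕ} : t ∈ (Icc 1 (b * m)).filter (b ∣ ·) ↔ ∃ c, 1 ≤ c ∧ c ≤ m ∧ b * c = t := by
    simp only [mem_filter, mem_Icc]
    constructor
    · rintro ⟨⟨h1, h2⟩, c, rfl⟩
      exact ⟨c, Nat.pos_of_mul_pos_left h1, Nat.le_of_mul_le_mul_left h2 hb, rfl⟩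
    · rintro ⟨c, h1, h2, rfl⟩
      exact ⟨⟨Nat.mul_pos hb h1, Nat.mul_le_mul_left b h2⟩, dvd_mul_right b c⟩
  refine sum_nbij' (fun t => m - t / b) (fun j => b * (m - j)) ?_ ?_ ?_ ?_ ?_
  · intro t ht
    obtain ⟨c, h1, h2, rfl⟩ := mem.mp ht
    rw [mem_range, Nat.mul_div_cancel_left c hb]
    omega
  · intro j hj
    exact mem.mpr ⟨m - j, by grind, by omega, rfl⟩
  · intro t ht
    obtain ⟨c, -, h2, rfl⟩ := mem.mp ht
    rw [Nat.mul_div_cancel_left c hb, Nat.sub_sub_self h2]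
  · intro j hj
    rw [Nat.mul_div_cancel_left _ hb, Nat.sub_sub_self (mem_range.mp hj).le]
  · intro t ht
    obtain ⟨c, -, -, rfl⟩ := mem.mp ht
    rw [Nat.mul_div_cancel_left c hb, Nat.mul_sub]

open Nat in
theorem numPermsWithPeriods_dvd_div_factorial_eq_prod {b : ℕ} (hb : 0 < b) (m : ℕ) :
    (numPermsWithPeriods (b ∣ ·) (b * m) : ℝ) / (b * m)! =
      ∏ j ∈ Icc 1 m, (((j : ℝ) - 1) * b + 1) / (j * b) := by
  set a : ℕ → ℝ := fun j => (numPermsWithPeriods (b ∣ ·) (b * j) : ℝ) / (b * j)! with ha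
  have hrec : ∀ m : ℕ, (b * m : ℝ) * a m = ∑ j ∈ range m, a j := fun m => by
    have h := mul_numPermsWithPeriods_div_factorial (b ∣ ·) (b * m)
    rw [sum_filter_dvd_Icc_mul hb m fun n => (numPermsWithPeriods (b ∣ ·) n : ℝ) / n !] at h
    exact_mod_cast h
  show a m = _
  induction m with
  | zero => simp [ha, numPermsWithPeriods_zero]
  | succ m ih =>
    have h := hrec (m + 1)
    rw [sum_range_succ, ← hrec m] at h
    rw [prod_Icc_succ_top (by omega), ← ih]
    have : ((m + 1 : ℕ) : ℝ) * b ≠ 0 := by positivity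
    field_simp
    push_cast at h ⊢
    linear_combination h

theorem stmt6_general (n b : ℕ) (hb : 0 < b) (hdvd : b ∣ n) :
    (Nat.card {x : Equiv.Perm (Fin n) //
        ∀ a : Fin n, b ∣ Function.minimalPeriod (⇑x) a} : ℝ) / Nat.factorial n =
      ∏ j ∈ Finset.Icc 1 (n / b), (((j : ℝ) - 1) * b + 1) / (j * b) := by
  obtain ⟨m, rfl⟩ := hdvd
  rw [Nat.mul_div_cancel_left m hb]
  exact numPermsWithPeriods_dvd_div_factorial_eq_prod hb m

/-- For `b ∣ n`, the proportion of permutations in `S_n` all of whose cycle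
lengths (including fixed points, whose cycle length is 1) are divisible by `b`
equals `∏_{j=1}^{n/b} ((j-1)b+1)/(jb)`, the coefficient of `u^n` in
`(1-u^b)^{-1/b}`. -/
theorem stmt6 (n b : ℕ) (hn : 0 < n) (hb : 0 < b) (hdvd : b ∣ n) :
    (Nat.card {x : Equiv.Perm (Fin n) //
        ∀ a : Fin n, b ∣ Function.minimalPeriod (⇑x) a} : ℝ) / Nat.factorial n =
      ∏ j ∈ Finset.Icc 1 (n / b), (((j : ℝ) - 1) * b + 1) / (j * b) :=
  stmt6_general n b hb hdvd
end

section
/- For every positive integer n, the coefficient of u^n in the power series (1-u)^{-1/2}, namely binom(2n, n)/4^n, is at most 1/√(πn). -/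
open Real

lemma aux_sq (n : ℕ) :
    ((Nat.choose (2 * n) n : ℝ) / 4 ^ n) ^ 2 * ((2 * n + 1) * Real.Wallis.W n) = 1 := by
  rw [Real.Wallis.W_eq_factorial_ratio]
  have hc : (Nat.choose (2 * n) n : ℝ) = ((2*n).factorial : ℝ) / ((n.factorial : ℝ) * n.factorial) := by
    rw [eq_div_iff (by positivity)]
    norm_cast
    rw [← Nat.choose_mul_factorial_mul_factorial (by omega : n ≤ 2 * n), show 2*n-n = n by omega]
    ring
  have h1 : (0:ℝ) < (n.factorial : ℝ) := by positivity
  have h2 : (0:ℝ) < ((2*n).factorial : ℝ) := by positivity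
  rw [hc]
  have : (2:ℝ) ^ (4 * n) = 4 ^ n * 4 ^ n := by
    rw [show (4:ℝ) = 2^2 by norm_num, ← pow_mul, ← pow_add]
    congr 1; ring
  field_simp
  rw [this]
  ring

/-- The coefficient of `u^n` in `(1-u)^{-1/2}`, namely `binom(2n,n)/4^n`, is at
most `1/√(πn)`. -/
theorem stmt12 (n : ℕ) (hn : 0 < n) :
    (Nat.choose (2 * n) n : ℝ) / 4 ^ n ≤ 1 / Real.sqrt (Real.pi * n) := by
  set a : ℝ := (Nat.choose (2 * n) n : ℝ) / 4 ^ n with ha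
  have ha0 : 0 ≤ a := by positivity
  have hW := Real.Wallis.le_W n
  have hWpos := Real.Wallis.W_pos n
  have key := aux_sq n
  have hn' : (1:ℝ) ≤ n := by exact_mod_cast hn
  have hpi := Real.pi_pos
  -- π * n ≤ (2n+1) * W n
  have h1 : Real.pi * n ≤ (2 * n + 1) * Real.Wallis.W n := by
    have h2 : ((2:ℝ) * n + 1) * ((2 * n + 1) / (2 * n + 2) * (π / 2)) ≤
        (2 * n + 1) * Real.Wallis.W n := by
      apply mul_le_mul_of_nonneg_left hW (by positivity)
    refine le_trans ?_ h2
    rw [div_mul_eq_mul_div, ← mul_div_assoc, ← mul_div_assoc, le_div_iff₀ (by positivity)]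
    nlinarith [hpi]
  -- a^2 ≤ 1 / (π n)
  have hsq : a ^ 2 ≤ 1 / (Real.pi * n) := by
    rw [le_div_iff₀ (by positivity), ← key]
    apply mul_le_mul_of_nonneg_left h1 (by positivity)
  calc a = Real.sqrt (a ^ 2) := by rw [Real.sqrt_sq ha0]
    _ ≤ Real.sqrt (1 / (Real.pi * n)) := Real.sqrt_le_sqrt hsq
    _ = 1 / Real.sqrt (Real.pi * n) := by
        rw [one_div, one_div, Real.sqrt_inv]
end

section
/- Let B_n = (Z/2Z) ≀ S_n be the group of signed permutations. The proportion of elements of B_n whose odd-length cycles are all negative and whose even-length cycles are all positive is the coefficient of u^n in (1-u)^{-1/2}, and hence is at most 1/√(πn). -/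
/-!
Put `δ = ε + 1`: a pair `(ε, π)` is counted iff `δ` sums to `0` (in `ZMod 2`) over every cycle
of `π`. Write a permutation of `Fin (n + 1)` as `decomposeFin.symm (p, σ)`. For `p = 0` the point
`0` is a new fixed point and `δ 0 = 0` is forced; for `p = q.succ` the point `0` is inserted into
the cycle of `q` and `δ 0` is free. So the count satisfies `c (n + 1) = (2n + 1) c n`, whence
`c n · 2ⁿ n! = (2n)!` and the proportion is `(2n choose n) / 4ⁿ`. The bound comes from Wallis'
estimate `W n ≥ (2n + 1) / (2n + 2) · π / 2` together with `(2n + 1) W n (choose (2n) n / 4ⁿ)² = 1`.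
-/

open scoped Classical

/-- The cycle of `π` containing `a`, as a finset. -/
noncomputable def cyc {n : ℕ} (π : Equiv.Perm (Fin n)) (a : Fin n) : Finset (Fin n) :=
  Finset.univ.filter (π.SameCycle a)

/-- The number of signed permutations (modeled as pairs `(ε, π)` with
`ε : Fin n → ZMod 2` the sign vector) all of whose odd-length cycles are
negative (sign sum 1) and all of whose even-length cycles are positive
(sign sum 0). -/
noncomputable def signedCount (n : ℕ) : ℕ :=
  (Finset.univ.filter fun p : (Fin n → ZMod 2) × Equiv.Perm (Fin n) =>
    ∀ a : Fin n,
      (Odd (cyc p.2 a).card → ∑ b ∈ cyc p.2 a, p.1 b = 1) ∧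
      (Even (cyc p.2 a).card → ∑ b ∈ cyc p.2 a, p.1 b = 0)).card

open Equiv Equiv.Perm Finset
open scoped Nat

theorem Equiv.Perm.SameCycle.map_of_forall_sameCycle_apply {α β : Type*} {τ : Perm α}
    {σ : Perm β} {f : α → β} (hf : ∀ a, σ.SameCycle (f a) (f (τ a))) {a b : α}
    (h : τ.SameCycle a b) : σ.SameCycle (f a) (f b) := by
  obtain ⟨i, rfl⟩ := h
  induction i using Int.induction_on with
  | zero => exact .refl _ _
  | succ i ih => rw [add_comm, zpow_one_add, mul_apply]; exact ih.trans (hf _)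
  | pred i ih =>
    have hτ : τ ((τ ^ (-(i : ℤ) - 1)) a) = (τ ^ (-(i : ℤ))) a := by
      rw [← mul_apply, ← zpow_one_add, add_sub_cancel]
    exact ih.trans (hτ ▸ hf _).symm

namespace SignedCount

variable {n : ℕ}

lemma parity_conditions_iff {m : ℕ} {s : ZMod 2} :
    ((Odd m → s = 1) ∧ (Even m → s = 0)) ↔ s + m = 0 := by
  rcases Nat.even_or_odd m with h | h
  · rw [(ZMod.natCast_eq_zero_iff_even).2 h]
    simp [h, Nat.not_odd_iff_even.2 h]
  · rw [(ZMod.natCast_eq_one_iff_odd).2 h]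
    simp only [h, Nat.not_even_iff_odd.2 h, true_implies, false_implies, and_true]
    revert s; decide

noncomputable def balanced (π : Perm (Fin n)) : Finset (Fin n → ZMod 2) :=
  univ.filter fun δ => ∀ a, ∑ b ∈ cyc π a, δ b = 0

lemma signedCount_eq_sum_card_balanced (n : ℕ) :
    signedCount n = ∑ π : Perm (Fin n), #(balanced π) := by
  rw [signedCount, card_filter, Fintype.sum_prod_type_right]
  refine sum_congr rfl fun π _ => ?_
  rw [← card_filter]
  refine card_nbij' (· + 1) (· + 1) (fun ε hε => ?_) (fun δ hδ => ?_) (fun ε _ => ?_)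
    (fun δ _ => ?_)
  · simp only [mem_coe, mem_filter, mem_univ, true_and, parity_conditions_iff] at hε
    simpa [balanced, sum_add_distrib] using hε
  · simp only [balanced, mem_coe, mem_filter, mem_univ, true_and, parity_conditions_iff] at hδ ⊢
    simpa [sum_add_distrib, add_assoc, CharTwo.add_self_eq_zero] using hδ
  all_goals
    funext b
    simp only [Pi.add_apply, Pi.one_apply, add_assoc, CharTwo.add_self_eq_zero, add_zero]

def collapse (c : Fin n) : Fin (n + 1) → Fin n :=
  Fin.cons c id

@[simp] lemma collapse_zero (c : Fin n) : collapse c 0 = c := rfl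

@[simp] lemma collapse_succ (c y : Fin n) : collapse c y.succ = y := rfl

lemma sameCycle_decomposeFin_symm_succ_apply (p : Fin (n + 1)) (σ : Perm (Fin n)) (y : Fin n) :
    (decomposeFin.symm (p, σ)).SameCycle y.succ (σ y).succ := by
  set τ := decomposeFin.symm (p, σ)
  by_cases hp : p = (σ y).succ
  · have h₁ : τ y.succ = 0 := by
      rw [decomposeFin_symm_apply_succ, ← hp, swap_apply_right]
    have h₂ : τ 0 = (σ y).succ := by rw [decomposeFin_symm_apply_zero, hp]
    exact (h₁ ▸ sameCycle_apply_right.2 (.refl τ _)).trans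
      (h₂ ▸ sameCycle_apply_right.2 (.refl τ _))
  · have h : τ y.succ = (σ y).succ := by
      rw [decomposeFin_symm_apply_succ,
        swap_apply_of_ne_of_ne (Fin.succ_ne_zero _) (Ne.symm hp)]
    exact h ▸ sameCycle_apply_right.2 (.refl τ _)

lemma sameCycle_decomposeFin_symm_succ_succ_of_sameCycle (p : Fin (n + 1)) (σ : Perm (Fin n))
    {x y : Fin n} (h : σ.SameCycle x y) : (decomposeFin.symm (p, σ)).SameCycle x.succ y.succ :=
  h.map_of_forall_sameCycle_apply (sameCycle_decomposeFin_symm_succ_apply p σ)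

lemma sameCycle_collapse_decomposeFin_symm_apply (σ : Perm (Fin n)) {c : Fin n} {p : Fin (n + 1)}
    (hp : p = 0 ∨ p = c.succ) (a : Fin (n + 1)) :
    σ.SameCycle (collapse c a) (collapse c (decomposeFin.symm (p, σ) a)) := by
  cases a using Fin.cases with
  | zero => rcases hp with rfl | rfl <;> simp [decomposeFin_symm_apply_zero, SameCycle.refl]
  | succ y =>
    rw [decomposeFin_symm_apply_succ, swap_apply_def, if_neg (Fin.succ_ne_zero _)]
    split_ifs with h
    · obtain rfl | rfl := hp
      · exact absurd h (Fin.succ_ne_zero _)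
      · simpa [← Fin.succ_inj.1 h] using sameCycle_apply_right.2 (.refl σ y)
    · simpa using sameCycle_apply_right.2 (.refl σ y)

lemma sameCycle_decomposeFin_symm_zero_succ_succ_iff (σ : Perm (Fin n)) {x y : Fin n} :
    (decomposeFin.symm (0, σ)).SameCycle x.succ y.succ ↔ σ.SameCycle x y :=
  ⟨fun h => h.map_of_forall_sameCycle_apply
    (sameCycle_collapse_decomposeFin_symm_apply σ (c := x) (Or.inl rfl)),
    sameCycle_decomposeFin_symm_succ_succ_of_sameCycle 0 σ⟩

lemma not_sameCycle_decomposeFin_symm_zero_zero_succ (σ : Perm (Fin n)) (y : Fin n) :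
    ¬ (decomposeFin.symm (0, σ)).SameCycle 0 y.succ := fun h =>
  Fin.succ_ne_zero y (h.eq_of_left (decomposeFin_symm_apply_zero 0 σ)).symm

lemma sameCycle_decomposeFin_symm_succ_iff (q : Fin n) (σ : Perm (Fin n)) {a b : Fin (n + 1)} :
    (decomposeFin.symm (q.succ, σ)).SameCycle a b ↔
      σ.SameCycle (collapse q a) (collapse q b) := by
  refine ⟨(·.map_of_forall_sameCycle_apply
    (sameCycle_collapse_decomposeFin_symm_apply σ (Or.inr rfl))), fun h => ?_⟩
  have h_collapse_succ : ∀ a, (decomposeFin.symm (q.succ, σ)).SameCycle a (collapse q a).succ := by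
    intro a
    cases a using Fin.cases with
    | zero => simpa [decomposeFin_symm_apply_zero] using
        sameCycle_apply_right.2 (.refl (decomposeFin.symm (q.succ, σ)) 0)
    | succ y => exact .refl _ _
  exact (h_collapse_succ a).trans
    ((sameCycle_decomposeFin_symm_succ_succ_of_sameCycle _ σ h).trans (h_collapse_succ b).symm)

lemma sum_cyc_eq_ite_add_sum (π : Perm (Fin (n + 1))) (a : Fin (n + 1))
    (δ : Fin (n + 1) → ZMod 2) :
    ∑ b ∈ cyc π a, δ b = (if π.SameCycle a 0 then δ 0 else 0) +
      ∑ y : Fin n, if π.SameCycle a y.succ then δ y.succ else 0 := by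
  rw [cyc, sum_filter, Fin.sum_univ_succ]

lemma mem_balanced_decomposeFin_symm_zero_iff (σ : Perm (Fin n)) (δ : Fin (n + 1) → ZMod 2) :
    δ ∈ balanced (decomposeFin.symm (0, σ)) ↔ δ 0 = 0 ∧ Fin.tail δ ∈ balanced σ := by
  simp only [balanced, mem_filter, mem_univ, true_and, Fin.forall_fin_succ,
    sum_cyc_eq_ite_add_sum]
  simp [sameCycle_decomposeFin_symm_zero_succ_succ_iff,
    not_sameCycle_decomposeFin_symm_zero_zero_succ,
    fun x => mt SameCycle.symm (not_sameCycle_decomposeFin_symm_zero_zero_succ σ x),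
    SameCycle.refl, cyc, sum_filter, Fin.tail]

lemma mem_balanced_decomposeFin_symm_succ_iff (q : Fin n) (σ : Perm (Fin n))
    (δ : Fin (n + 1) → ZMod 2) :
    δ ∈ balanced (decomposeFin.symm (q.succ, σ)) ↔ Fin.tail δ + Pi.single q (δ 0) ∈ balanced σ := by
  have h_sum : ∀ a, ∑ b ∈ cyc (decomposeFin.symm (q.succ, σ)) a, δ b =
      ∑ z ∈ cyc σ (collapse q a), (Fin.tail δ + Pi.single q (δ 0) : Fin n → ZMod 2) z := by
    intro a
    rw [sum_cyc_eq_ite_add_sum, Pi.add_def, sum_add_distrib, sum_pi_single', cyc, sum_filter,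
      add_comm]
    simp [sameCycle_decomposeFin_symm_succ_iff, Fin.tail]
  simp only [balanced, mem_filter, mem_univ, true_and, h_sum]
  exact ⟨fun h x => h x.succ, fun h a => h _⟩

lemma card_balanced_decomposeFin_symm_zero (σ : Perm (Fin n)) :
    #(balanced (decomposeFin.symm (0, σ))) = #(balanced σ) := by
  refine card_nbij' Fin.tail (fun η => Fin.cons 0 η) (fun δ hδ => ?_) (fun η hη => ?_)
    (fun δ hδ => ?_) (fun η _ => Fin.tail_cons _ _)
  · exact ((mem_balanced_decomposeFin_symm_zero_iff σ δ).1 hδ).2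
  · simpa [mem_balanced_decomposeFin_symm_zero_iff] using hη
  · rw [← ((mem_balanced_decomposeFin_symm_zero_iff σ δ).1 hδ).1]
    exact Fin.cons_self_tail δ

lemma card_balanced_decomposeFin_symm_succ (q : Fin n) (σ : Perm (Fin n)) :
    #(balanced (decomposeFin.symm (q.succ, σ))) = 2 * #(balanced σ) := by
  rw [show 2 * #(balanced σ) = #((univ : Finset (ZMod 2)) ×ˢ balanced σ) by simp]
  refine card_nbij' (fun δ => (δ 0, Fin.tail δ + Pi.single q (δ 0)))
    (fun p => Fin.cons p.1 (p.2 - Pi.single q p.1)) (fun δ hδ => ?_) (fun p hp => ?_)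
    (fun δ _ => ?_) (fun p _ => ?_)
  · simpa [mem_balanced_decomposeFin_symm_succ_iff] using hδ
  · simpa [mem_balanced_decomposeFin_symm_succ_iff] using hp
  · simp [Fin.cons_self_tail]
  · simp

lemma sum_card_balanced_succ (n : ℕ) :
    ∑ π : Perm (Fin (n + 1)), #(balanced π) =
      (2 * n + 1) * ∑ σ : Perm (Fin n), #(balanced σ) := by
  rw [← decomposeFin.symm.sum_comp, Fintype.sum_prod_type, Fin.sum_univ_succ]
  simp only [card_balanced_decomposeFin_symm_zero, card_balanced_decomposeFin_symm_succ,
    sum_const, card_univ, Fintype.card_fin, smul_eq_mul, ← mul_sum]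
  ring

lemma signedCount_zero : signedCount 0 = 1 := by
  simp [signedCount_eq_sum_card_balanced, balanced]

lemma signedCount_succ (n : ℕ) : signedCount (n + 1) = (2 * n + 1) * signedCount n := by
  rw [signedCount_eq_sum_card_balanced, signedCount_eq_sum_card_balanced, sum_card_balanced_succ]

lemma signedCount_mul_two_pow_mul_factorial (n : ℕ) :
    signedCount n * (2 ^ n * n !) = (2 * n)! := by
  induction n with
  | zero => simp [signedCount_zero]
  | succ n ih =>
    rw [signedCount_succ, show 2 * (n + 1) = 2 * n + 1 + 1 by ring,
      Nat.factorial_succ (2 * n + 1), Nat.factorial_succ (2 * n), ← ih, Nat.factorial_succ,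
      pow_succ]
    ring

lemma signedCount_div_eq_choose_div (n : ℕ) :
    (signedCount n : ℝ) / (2 ^ n * n !) = ((2 * n).choose n : ℝ) / 4 ^ n := by
  have h_choose : ((2 * n).choose n : ℝ) * n ! * n ! = (2 * n)! := by
    exact_mod_cast two_mul n ▸ Nat.add_choose_mul_factorial_mul_factorial n n
  have h_count : (signedCount n : ℝ) * (2 ^ n * n !) = (2 * n)! := by
    exact_mod_cast signedCount_mul_two_pow_mul_factorial n
  rw [div_eq_div_iff (by positivity) (by positivity)]
  refine mul_right_cancel₀ (Nat.cast_ne_zero.2 (Nat.factorial_ne_zero n) : (n ! : ℝ) ≠ 0) ?_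
  rw [show (4 : ℝ) ^ n = 2 ^ n * 2 ^ n by rw [← mul_pow]; norm_num]
  linear_combination 2 ^ n * (h_count - h_choose)

end SignedCount

open Real in
lemma choose_two_mul_div_four_pow_le {n : ℕ} (hn : 0 < n) :
    ((2 * n).choose n : ℝ) / 4 ^ n ≤ 1 / √(π * n) := by
  set r := ((2 * n).choose n : ℝ) / 4 ^ n
  have h_wallis : (2 * n + 1) * Wallis.W n * r ^ 2 = 1 := by
    have h_choose : ((2 * n).choose n : ℝ) * n ! * n ! = (2 * n)! := by
      exact_mod_cast two_mul n ▸ Nat.add_choose_mul_factorial_mul_factorial n n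
    rw [Wallis.W_eq_factorial_ratio, ← h_choose, show (2 : ℝ) ^ (4 * n) = (4 ^ n) ^ 2 by
      rw [← pow_mul, show (4 : ℝ) = 2 ^ 2 by norm_num, ← pow_mul]; ring_nf]
    have h_pos : ((2 * n).choose n : ℝ) ≠ 0 := by
      exact_mod_cast (Nat.choose_pos (by omega)).ne'
    simp only [r]
    field_simp
  have h_pi : π * n ≤ (2 * n + 1) * Wallis.W n := by
    refine le_trans ?_ (mul_le_mul_of_nonneg_left (Wallis.le_W n) (by positivity))
    rw [← sub_nonneg]
    field_simp
    ring_nf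
    positivity
  have h_sq : r ^ 2 * (π * n) ≤ 1 := by nlinarith [sq_nonneg r]
  have hr : 0 ≤ r := by positivity
  rw [le_div_iff₀ (by positivity), ← sqrt_sq hr, ← sqrt_mul (sq_nonneg r)]
  exact sqrt_le_one.2 h_sq

/-- The proportion of elements of `B_n` with all odd cycles negative and all even
cycles positive is the coefficient of `u^n` in `(1-u)^{-1/2}`, hence at most
`1/√(πn)`. -/
theorem stmt13 (n : ℕ) (hn : 0 < n) :
    (signedCount n : ℝ) / (2 ^ n * Nat.factorial n) =
        (Nat.choose (2 * n) n : ℝ) / 4 ^ n ∧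
      (signedCount n : ℝ) / (2 ^ n * Nat.factorial n) ≤
        1 / Real.sqrt (Real.pi * n) := by
  rw [SignedCount.signedCount_div_eq_choose_div]
  exact ⟨rfl, choose_two_mul_div_four_pow_le hn⟩
end

section
/- Let b be a prime and suppose b divides n. Let A be an element of GL(n/b, q^b), regarded as an element of GL(n, q) via the natural embedding (viewing F_{q^b}^{n/b} as an n-dimensional F_q-vector space). Then every monic irreducible factor f over F_q of the characteristic polynomial of A (over F_q) satisfies at least one of: (i) b divides deg(f), or (ii) in the rational canonical form of A, each Jordan block size associated to f occurs with multiplicity a multiple of b. -/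
open Polynomial Module

section AuxB

variable {F : Type*} [Field F] {V : Type*} [AddCommGroup V] [Module F V]
  [FiniteDimensional F V]

set_option maxHeartbeats 1000000 in
private lemma aux_deg_dvd (f : V →ₗ[F] V) (p : F[X]) (hirr : Irreducible p) (i : ℕ) :
    (p.natDegree : ℤ) ∣
      (finrank F (LinearMap.ker ((aeval f p) ^ (i + 1))) : ℤ) -
        (finrank F (LinearMap.ker ((aeval f p) ^ i)) : ℤ) := by
  haveI : Fact (Irreducible p) := ⟨hirr⟩
  set N : V →ₗ[F] V := aeval f p with hN
  have hcomm : Commute f N := by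
    show f * N = N * f
    calc f * N = aeval f (X * p) := by rw [map_mul, aeval_X]
    _ = aeval f (p * X) := by rw [mul_comm]
    _ = N * f := by rw [map_mul, aeval_X]
  have hinv : ∀ c : ℕ, ∀ x ∈ LinearMap.ker (N ^ c), f x ∈ LinearMap.ker (N ^ c) := by
    intro c x hx
    rw [LinearMap.mem_ker] at hx ⊢
    have h1 : (N ^ c) (f x) = ((N ^ c) * f) x := rfl
    rw [h1, ← (hcomm.pow_right c).eq, Module.End.mul_apply, hx, map_zero]
  set U : Submodule F V := LinearMap.ker (N ^ (i + 1)) with hU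
  set W : Submodule F V := LinearMap.ker (N ^ i) with hW
  have hWU : W ≤ U := by
    intro x hx
    rw [hW, LinearMap.mem_ker] at hx
    rw [hU, LinearMap.mem_ker, pow_succ', Module.End.mul_apply, hx, map_zero]
  set W' : Submodule F U := W.comap U.subtype with hW'
  set fU : U →ₗ[F] U := f.restrict (hinv (i + 1)) with hfU
  have hfUW' : W' ≤ W'.comap fU := by
    intro u hu
    simp only [hW', Submodule.mem_comap, Submodule.coe_subtype] at hu ⊢
    rw [LinearMap.restrict_coe_apply]
    exact hinv i _ hu
  set fQ : (U ⧸ W') →ₗ[F] (U ⧸ W') := W'.mapQ W' fU hfUW' with hfQ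
  have hpowU : ∀ (c : ℕ) (u : U), ((fU ^ c) u : V) = (f ^ c) (u : V) := by
    intro c u
    rw [hfU, Module.End.pow_restrict, LinearMap.restrict_coe_apply]
  have hpowQ : ∀ (c : ℕ) (u : U), (fQ ^ c) (W'.mkQ u) = W'.mkQ ((fU ^ c) u) := by
    intro c u
    rw [hfQ, ← Submodule.mapQ_pow W' hfUW' c]
    rfl
  have h0 : aeval fQ p = 0 := by
    apply LinearMap.ext
    intro q
    obtain ⟨u, rfl⟩ := W'.mkQ_surjective q
    rw [LinearMap.zero_apply, aeval_eq_sum_range]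
    simp only [LinearMap.coe_sum, Finset.sum_apply, LinearMap.smul_apply]
    have hc : ∀ c ∈ Finset.range (p.natDegree + 1),
        p.coeff c • (fQ ^ c) (W'.mkQ u) = W'.mkQ (p.coeff c • (fU ^ c) u) := by
      intro c _
      rw [hpowQ, map_smul]
    rw [Finset.sum_congr rfl hc, ← map_sum, Submodule.mkQ_apply,
      Submodule.Quotient.mk_eq_zero]
    rw [hW', Submodule.mem_comap, Submodule.coe_subtype]
    have hval : ((∑ c ∈ Finset.range (p.natDegree + 1), p.coeff c • (fU ^ c) u : U) : V)
        = (aeval f p) (u : V) := by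
      rw [Submodule.coe_sum, aeval_eq_sum_range]
      simp only [LinearMap.coe_sum, Finset.sum_apply, LinearMap.smul_apply]
      refine Finset.sum_congr rfl fun c _ => ?_
      rw [SetLike.val_smul, hpowU]
    rw [hval, hW, LinearMap.mem_ker]
    have h2 : (N ^ i) (N (u : V)) = (N ^ (i + 1)) (u : V) := by
      rw [pow_succ, Module.End.mul_apply]
    rw [← hN, h2]
    exact u.2
  -- dimension counting
  have e1 : finrank F (U ⧸ W') + finrank F W' = finrank F U :=
    Submodule.finrank_quotient_add_finrank W'
  have e2 : finrank F W' = finrank F W :=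
    LinearEquiv.finrank_eq (Submodule.comapSubtypeEquivOfLe hWU)
  let E := AdjoinRoot p
  let φ : E →ₐ[F] Module.End F (↥U ⧸ W') := Ideal.Quotient.liftₐ (Ideal.span {p}) (aeval fQ)
    (fun a ha => by
      obtain ⟨c, rfl⟩ := Ideal.mem_span_singleton.mp ha
      rw [map_mul, h0, zero_mul])
  letI : Module E (U ⧸ W') := Module.compHom (U ⧸ W') φ.toRingHom
  haveI : IsScalarTower F E (U ⧸ W') := ⟨by
    intro a e q
    show φ (a • e) q = a • (φ e q)
    rw [map_smul]
    rfl⟩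
  haveI : Module.Finite E (U ⧸ W') := Module.Finite.of_restrictScalars_finite F E (U ⧸ W')
  have e3 : finrank F E * finrank E (U ⧸ W') = finrank F (U ⧸ W') :=
    Module.finrank_mul_finrank F E (U ⧸ W')
  have e4 : finrank F E = p.natDegree := by
    rw [(AdjoinRoot.powerBasis hirr.ne_zero).finrank, AdjoinRoot.powerBasis_dim]
  refine ⟨finrank E (U ⧸ W'), ?_⟩
  have : finrank F U = p.natDegree * finrank E (U ⧸ W') + finrank F W := by
    rw [← e2, ← e1, ← e3, e4]
  rw [this]
  push_cast
  ring

/-- `finrank F K` divides the `F`-dimension of kernels of powers of `p(g)` for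
a `K`-linear endomorphism `g`. -/
private lemma aux_b_dvd {K : Type*} [Field K] [Algebra F K] [FiniteDimensional F K]
    {V : Type*} [AddCommGroup V] [Module K V] [Module F V] [IsScalarTower F K V]
    [FiniteDimensional K V] (g : V →ₗ[K] V) (p : F[X]) (i : ℕ) :
    finrank F K ∣ finrank F (LinearMap.ker ((aeval (g.restrictScalars F) p) ^ i)) := by
  let ψ : Module.End K V →ₐ[F] Module.End F V :=
    { toFun := LinearMap.restrictScalars F
      map_one' := rfl
      map_mul' := fun _ _ => rfl
      map_zero' := rfl
      map_add' := fun _ _ => rfl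
      commutes' := fun a => rfl }
  have key : aeval (g.restrictScalars F) p = ψ (aeval g p) := by
    rw [show g.restrictScalars F = ψ g from rfl, aeval_algHom_apply]
  rw [key, ← map_pow]
  rw [show ψ ((aeval g p) ^ i) = ((aeval g p) ^ i).restrictScalars F from rfl,
    LinearMap.ker_restrictScalars]
  set S := LinearMap.ker ((aeval g p) ^ i)
  rw [LinearEquiv.finrank_eq ((Submodule.restrictScalarsEquiv F K V S).restrictScalars F)]
  exact ⟨finrank K S, (Module.finrank_mul_finrank F K S).symm⟩

end AuxB

/-- Let `b` be prime, `K/F` an extension of finite fields of degree `b`, and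
`g` an invertible `K`-linear endomorphism of `K^m` (so `g`, viewed over `F`, is
an element of `GL(n, q)` with `n = mb`, coming from `GL(n/b, q^b)`).  Then every
monic irreducible factor `p` over `F` of the characteristic polynomial of `g`
over `F` satisfies: `b ∣ deg p`, or each generalized Jordan block size for `p`
occurs with multiplicity a multiple of `b`.  The multiplicity of blocks of size
`j` for `p` is `(2·k_j - k_{j-1} - k_{j+1})/deg p` where
`k_j = dim_F ker (p(g)^j)`. -/
theorem stmt19 (F K : Type*) [Field F] [Finite F] [Field K] [Algebra F K]
    [FiniteDimensional F K] (b m : ℕ) (hb : b.Prime)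
    (hbK : Module.finrank F K = b)
    (g : (Fin m → K) →ₗ[K] (Fin m → K)) (hg : Function.Bijective g)
    (p : Polynomial F) (hmonic : p.Monic) (hirr : Irreducible p)
    (hdvd : p ∣ (g.restrictScalars F).charpoly) :
    b ∣ p.natDegree ∨
      ∀ j : ℕ,
        (b * p.natDegree : ℤ) ∣
          2 * (Module.finrank F
              (LinearMap.ker ((Polynomial.aeval (g.restrictScalars F) p) ^ (j + 1))) : ℤ) -
            (Module.finrank F
              (LinearMap.ker ((Polynomial.aeval (g.restrictScalars F) p) ^ j)) : ℤ) -
            (Module.finrank F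
              (LinearMap.ker ((Polynomial.aeval (g.restrictScalars F) p) ^ (j + 2))) : ℤ) := by
  by_cases hbp : b ∣ p.natDegree
  · exact Or.inl hbp
  right
  intro j
  haveI : FiniteDimensional F (Fin m → K) := Module.Finite.trans K (Fin m → K)
  set f := g.restrictScalars F with hf
  set k : ℕ → ℤ := fun i => (finrank F (LinearMap.ker ((aeval f p) ^ i)) : ℤ) with hk
  have hbk : ∀ i : ℕ, (b : ℤ) ∣ k i := by
    intro i
    obtain ⟨d, hd⟩ := aux_b_dvd g p i
    exact ⟨d, by rw [hk]; simp only []; rw [hd, hbK]; push_cast; ring⟩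
  have hpk : ∀ i : ℕ, (p.natDegree : ℤ) ∣ k (i + 1) - k i := fun i => aux_deg_dvd f p hirr i
  have hE : 2 * k (j + 1) - k j - k (j + 2) = (k (j + 1) - k j) - (k (j + 2) - k (j + 1)) := by
    ring
  have hpd : (p.natDegree : ℤ) ∣ 2 * k (j + 1) - k j - k (j + 2) := by
    rw [hE]
    exact dvd_sub (hpk j) (hpk (j + 1))
  have hbd : (b : ℤ) ∣ 2 * k (j + 1) - k j - k (j + 2) :=
    dvd_sub (dvd_sub (Dvd.dvd.mul_left (hbk (j + 1)) 2) (hbk j)) (hbk (j + 2))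
  have hco : IsCoprime (b : ℤ) (p.natDegree : ℤ) :=
    Int.isCoprime_iff_gcd_eq_one.mpr (by
      simpa using (Nat.Prime.coprime_iff_not_dvd hb).mpr hbp)
  exact hco.mul_dvd hbd hpd
end
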